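/- arXiv:gr-qc/9506031 — 2 statements merged into one kernel-verified Lean document; each statement's English description precedes it below -/
import Mathlib

section
/- Let R be an η-symmetric linear operator on ℝ^5 and λ1, λ2 ∈ ℝ. Then there do not exist vectors X1, X2, X3, X4, X5 forming a basis of ℝ^5 and satisfying the Jordan chain relations R X1 = λ1 X1, R X2 = λ1 X2 + X1, R X3 = λ1 X3 + X2, R X4 = λ1 X4 + X3, R X5 = λ2 X5. (A second order symmetric tensor on a 5-dimensional Lorentzian space cannot have Segre type [41] or its degeneracy [(41)].) -/
/-!
Symmetry of `R` forces the first two vectors of a Jordan chain of length at least four to span a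
totally null plane: `η(X₁, X₁) = η(X₂, X₁) = 0` and `η(X₂, X₂) = η(X₃, X₁) = 0`. In Lorentzian
signature a totally null subspace is at most a line: for null, mutually orthogonal `u`, `v` the
vector `v₀ u - u₀ v` is null with vanishing time component, hence zero.
-/

/-- The 5-dimensional Minkowski bilinear form of signature (-,+,+,+,+). -/
def eta (u v : Fin 5 → ℝ) : ℝ :=
  -u 0 * v 0 + u 1 * v 1 + u 2 * v 2 + u 3 * v 3 + u 4 * v 4

lemma eta_zero_right (u : Fin 5 → ℝ) : eta u 0 = 0 := by
  simp [eta]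

lemma eta_eq_of_jordan_step {R : (Fin 5 → ℝ) →ₗ[ℝ] (Fin 5 → ℝ)}
    (hR : ∀ u v : Fin 5 → ℝ, eta (R u) v = eta u (R v)) {c : ℝ} {x y x' y' : Fin 5 → ℝ}
    (hx : R x = c • x + y) (hx' : R x' = c • x' + y') : eta y x' = eta x y' := by
  have h := hR x x'
  rw [hx, hx'] at h
  simp only [eta, Pi.add_apply, Pi.smul_apply, smul_eq_mul] at h ⊢
  linear_combination h

lemma eq_zero_of_eta_self_eq_zero {w : Fin 5 → ℝ} (hw0 : w 0 = 0) (hww : eta w w = 0) :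
    w = 0 := by
  simp only [eta, hw0, mul_zero, neg_zero, zero_add] at hww
  funext i
  fin_cases i <;> simp only [Fin.zero_eta, Fin.mk_one, Fin.reduceFinMk, Pi.zero_apply, hw0] <;>
    nlinarith [mul_self_nonneg (w 1), mul_self_nonneg (w 2), mul_self_nonneg (w 3),
      mul_self_nonneg (w 4)]

lemma not_linearIndependent_of_eta_eq_zero {u v : Fin 5 → ℝ} (huu : eta u u = 0)
    (hvu : eta v u = 0) (hvv : eta v v = 0) : ¬ LinearIndependent ℝ ![u, v] := by
  rw [LinearIndependent.pair_iff]
  intro h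
  by_cases hu0 : u 0 = 0
  · have hu : u = 0 := eq_zero_of_eta_self_eq_zero hu0 huu
    simpa using h 1 0 (by simp [hu])
  · have hw : v 0 • u + (-u 0) • v = 0 := by
      refine eq_zero_of_eta_self_eq_zero ?_ ?_ <;>
        simp only [eta, Pi.add_apply, Pi.smul_apply, smul_eq_mul] at huu hvu hvv ⊢
      · ring
      · linear_combination (v 0) ^ 2 * huu + 2 * (v 0) * (-u 0) * hvu + (u 0) ^ 2 * hvv
    exact hu0 (neg_eq_zero.mp (h _ _ hw).2)

theorem no_segre_type_41 (R : (Fin 5 → ℝ) →ₗ[ℝ] (Fin 5 → ℝ))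
    (hR : ∀ u v : Fin 5 → ℝ, eta (R u) v = eta u (R v)) (lam1 lam2 : ℝ) :
    ¬ ∃ X1 X2 X3 X4 X5 : Fin 5 → ℝ,
      (LinearIndependent ℝ ![X1, X2, X3, X4, X5] ∧
        Submodule.span ℝ {X1, X2, X3, X4, X5} = ⊤) ∧
      R X1 = lam1 • X1 ∧
      R X2 = lam1 • X2 + X1 ∧
      R X3 = lam1 • X3 + X2 ∧
      R X4 = lam1 • X4 + X3 ∧
      R X5 = lam2 • X5 := by
  rintro ⟨X1, X2, X3, X4, X5, ⟨hli, -⟩, h1, h2, h3, h4, -⟩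
  have h1' : R X1 = lam1 • X1 + 0 := by rw [h1, add_zero]
  have e11 : eta X1 X1 = 0 := (eta_eq_of_jordan_step hR h2 h1').trans (eta_zero_right X2)
  have e21 : eta X2 X1 = 0 := (eta_eq_of_jordan_step hR h3 h1').trans (eta_zero_right X3)
  have e31 : eta X3 X1 = 0 := (eta_eq_of_jordan_step hR h4 h1').trans (eta_zero_right X4)
  have e22 : eta X2 X2 = 0 := (eta_eq_of_jordan_step hR h3 h2).trans e31
  have h12 : LinearIndependent ℝ ![X1, X2] := by
    convert hli.comp ![0, 1] (by decide) using 1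
    ext i
    fin_cases i <;> rfl
  exact not_linearIndependent_of_eta_eq_zero e11 e21 e22 h12
end

section
/- Let R be an η-symmetric linear operator on ℝ^5 that possesses a timelike eigenvector, i.e., there exist t ∈ ℝ^5 with η(t,t) < 0 and μ ∈ ℝ with R t = μ t. Then there exists a basis e1, e2, e3, e4, e5 of ℝ^5 consisting of eigenvectors of R that are pairwise η-orthogonal, with η(e1,e1) = -1 and η(e2,e2) = η(e3,e3) = η(e4,e4) = η(e5,e5) = 1. (An η-symmetric operator with a timelike eigenvector is diagonalizable over ℝ in an η-orthonormal eigenbasis; Segre type [1,1111] or a degeneracy thereof.) -/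
/-!
The η-orthogonal complement `W` of a timelike vector `t` is spacelike: for `w ∈ W` and
`c = w 0 / t 0`, the vector `w - c • t` is purely spatial and
`η(w, w) = η(w - c • t, w - c • t) - c² η(t, t)`. As `t` is an eigenvector of the η-symmetric `R`,
`R` preserves `W`, and the spectral theorem on the Euclidean space `(W, η)` gives an
η-orthonormal eigenbasis of `R` on `W`. Adjoining `t`, normalised to `η(t, t) = -1`, completes it.
-/

open LinearMap (BilinForm)
open Module Matrix

theorem LinearMap.IsSelfAdjoint.apply_mem_ker_of_eigenvector {K M : Type*} [CommSemiring K]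
    [AddCommMonoid M] [Module K M] {B : BilinForm K M} {T : Module.End K M}
    (hT : B.IsSelfAdjoint T) {x : M} {μ : K} (hx : T x = μ • x) {w : M}
    (hw : w ∈ LinearMap.ker (B x)) : T w ∈ LinearMap.ker (B x) := by
  rw [LinearMap.mem_ker] at hw ⊢
  rw [← hT x w, hx, map_smul, LinearMap.smul_apply, hw, smul_zero]

namespace LinearMap.BilinForm.IsSymm

variable {V : Type*} [AddCommGroup V] [Module ℝ V] {B : BilinForm ℝ V}

@[reducible]
noncomputable def innerProductCoreOfPosOn (hB : B.IsSymm) (W : Submodule ℝ V)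
    (hW : ∀ w ∈ W, w ≠ 0 → 0 < B w w) : InnerProductSpace.Core ℝ W where
  inner x y := B x y
  conj_inner_symm x y := hB.eq y x
  re_inner_nonneg x := by
    obtain hx | hx := eq_or_ne (x : V) 0
    · simp [hx]
    · exact (hW x x.2 hx).le
  add_left x y z := by simp
  smul_left x y r := by simp
  definite x hx := by
    by_contra h
    exact (hW x x.2 (by simpa using h)).ne' hx

theorem exists_orthonormal_eigenvectors_of_posOn (hB : B.IsSymm) {W : Submodule ℝ V}
    [FiniteDimensional ℝ W] (hW : ∀ w ∈ W, w ≠ 0 → 0 < B w w) {T : Module.End ℝ V}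
    (hT : B.IsSelfAdjoint T) (hTW : ∀ w ∈ W, T w ∈ W) {n : ℕ} (hn : finrank ℝ W = n) :
    ∃ v : Fin n → V, (∀ i, v i ∈ W) ∧ (∀ i, ∃ μ : ℝ, T (v i) = μ • v i) ∧
      ∀ i j, B (v i) (v j) = if i = j then 1 else 0 := by
  -- `W` carries no norm of its own, so the one induced by `B` can be installed locally.
  let _ := hB.innerProductCoreOfPosOn W hW
  let _ : NormedAddCommGroup W := InnerProductSpace.Core.toNormedAddCommGroup (𝕜 := ℝ)
  let _ : InnerProductSpace ℝ W := InnerProductSpace.ofCore _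
  have hS : (T.restrict hTW).IsSymmetric := fun x y => hT x y
  let b := hS.eigenvectorBasis hn
  exact ⟨fun i => b i, fun i => (b i).2,
    fun i => ⟨_, congrArg Subtype.val (hS.apply_eigenvectorBasis hn i)⟩,
    orthonormal_iff_ite.1 b.orthonormal⟩

end LinearMap.BilinForm.IsSymm

theorem eta_comm (u v : Fin 5 → ℝ) : eta u v = eta v u := by
  simp only [eta]; ring

theorem eta_smul_smul (c : ℝ) (u v : Fin 5 → ℝ) : eta (c • u) (c • v) = c ^ 2 * eta u v := by
  simp only [eta, Pi.smul_apply, smul_eq_mul]; ring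

theorem eta_self_eq_dotProduct_sub (v : Fin 5 → ℝ) : eta v v = v ⬝ᵥ v - 2 * v 0 ^ 2 := by
  simp only [eta, dotProduct, Fin.sum_univ_five]; ring

def etaForm : BilinForm ℝ (Fin 5 → ℝ) :=
  LinearMap.mk₂ ℝ eta (fun _ _ _ => by simp only [eta, Pi.add_apply]; ring)
    (fun _ _ _ => by simp only [eta, Pi.smul_apply, smul_eq_mul]; ring)
    (fun _ _ _ => by simp only [eta, Pi.add_apply]; ring)
    (fun _ _ _ => by simp only [eta, Pi.smul_apply, smul_eq_mul]; ring)

@[simp]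
theorem etaForm_apply (u v : Fin 5 → ℝ) : etaForm u v = eta u v := rfl

theorem isSymm_etaForm : etaForm.IsSymm := ⟨eta_comm⟩

theorem eta_self_nonneg_of_apply_zero {v : Fin 5 → ℝ} (hv : v 0 = 0) : 0 ≤ eta v v := by
  rw [eta_self_eq_dotProduct_sub, hv]
  simpa using dotProduct_star_self_nonneg v

theorem eta_self_pos_of_apply_zero {v : Fin 5 → ℝ} (hv : v 0 = 0) (hv' : v ≠ 0) :
    0 < eta v v :=
  (eta_self_nonneg_of_apply_zero hv).lt_of_ne' <| by
    simpa [eta_self_eq_dotProduct_sub, hv] using hv'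

theorem eta_self_pos_of_eta_eq_zero {t w : Fin 5 → ℝ} (ht : eta t t < 0) (htw : eta t w = 0)
    (hw : w ≠ 0) : 0 < eta w w := by
  obtain hw0 | hw0 := eq_or_ne (w 0) 0
  · exact eta_self_pos_of_apply_zero hw0 hw
  have ht0 : t 0 ≠ 0 := fun h => (eta_self_nonneg_of_apply_zero h).not_gt ht
  set c := w 0 / t 0
  have hc : c ≠ 0 := div_ne_zero hw0 ht0
  have hw' : (w - c • t) 0 = 0 := by simp [c, ht0]
  have key : eta w w = eta (w - c • t) (w - c • t) - c ^ 2 * eta t t := by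
    simp only [eta, Pi.sub_apply, Pi.smul_apply, smul_eq_mul] at htw ⊢
    linear_combination (2 * c) * htw
  rw [key]
  linarith [eta_self_nonneg_of_apply_zero hw', mul_pos (sq_pos_of_ne_zero hc) (neg_pos.2 ht)]

theorem exists_smul_eta_self_eq_neg_one {t : Fin 5 → ℝ} (ht : eta t t < 0) :
    ∃ c : ℝ, eta (c • t) (c • t) = -1 := by
  refine ⟨(√(-eta t t))⁻¹, ?_⟩
  rw [eta_smul_smul, inv_pow, Real.sq_sqrt (by linarith), inv_mul_eq_div, div_neg, div_self ht.ne]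

theorem finrank_ker_etaForm {t : Fin 5 → ℝ} (ht : eta t t ≠ 0) :
    finrank ℝ (LinearMap.ker (etaForm t)) = 4 := by
  simpa using Module.Dual.finrank_ker_add_one_of_ne_zero (f := etaForm t) fun h =>
    ht (by simp [← etaForm_apply, h])

theorem exists_eta_orthonormal_eigenvectors {R : Module.End ℝ (Fin 5 → ℝ)}
    (hR : etaForm.IsSelfAdjoint R) {t : Fin 5 → ℝ} (ht : eta t t < 0) {μ : ℝ}
    (hμ : R t = μ • t) :
    ∃ e : Fin 5 → Fin 5 → ℝ, (∀ i, ∃ μ : ℝ, R (e i) = μ • e i) ∧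
      ∀ i j, eta (e i) (e j) = if i = j then (if i = 0 then -1 else 1) else 0 := by
  obtain ⟨c, hc⟩ := exists_smul_eta_self_eq_neg_one ht
  set e₀ := c • t
  have he₀ : R e₀ = μ • e₀ := by rw [map_smul, hμ, smul_comm]
  obtain ⟨v, hvW, hv, hvv⟩ := isSymm_etaForm.exists_orthonormal_eigenvectors_of_posOn
    (fun w hw => eta_self_pos_of_eta_eq_zero (hc.trans_lt neg_one_lt_zero) hw) hR
    (fun w => hR.apply_mem_ker_of_eigenvector he₀) (finrank_ker_etaForm (by simp [hc]))
  have h0v : ∀ i, eta e₀ (v i) = 0 := hvW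
  have hvv : ∀ i j, eta (v i) (v j) = if i = j then 1 else 0 := hvv
  refine ⟨Fin.cons e₀ v, Fin.cases ⟨μ, he₀⟩ hv, fun i j => ?_⟩
  cases i using Fin.cases <;> cases j using Fin.cases <;>
    simp [hc, h0v, hvv, eta_comm _ e₀, (Fin.succ_ne_zero _).symm]

theorem timelike_eigenvector_diagonalizable
    (R : (Fin 5 → ℝ) →ₗ[ℝ] (Fin 5 → ℝ))
    (hR : ∀ u v : Fin 5 → ℝ, eta (R u) v = eta u (R v))
    (t : Fin 5 → ℝ) (ht : eta t t < 0) (μ : ℝ) (hμ : R t = μ • t) :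
    ∃ e1 e2 e3 e4 e5 : Fin 5 → ℝ,
      (LinearIndependent ℝ ![e1, e2, e3, e4, e5] ∧
        Submodule.span ℝ {e1, e2, e3, e4, e5} = (⊤ : Submodule ℝ (Fin 5 → ℝ))) ∧
      (∃ μ1 : ℝ, R e1 = μ1 • e1) ∧ (∃ μ2 : ℝ, R e2 = μ2 • e2) ∧
      (∃ μ3 : ℝ, R e3 = μ3 • e3) ∧ (∃ μ4 : ℝ, R e4 = μ4 • e4) ∧
      (∃ μ5 : ℝ, R e5 = μ5 • e5) ∧
      eta e1 e2 = 0 ∧ eta e1 e3 = 0 ∧ eta e1 e4 = 0 ∧ eta e1 e5 = 0 ∧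
      eta e2 e3 = 0 ∧ eta e2 e4 = 0 ∧ eta e2 e5 = 0 ∧
      eta e3 e4 = 0 ∧ eta e3 e5 = 0 ∧ eta e4 e5 = 0 ∧
      eta e1 e1 = -1 ∧ eta e2 e2 = 1 ∧ eta e3 e3 = 1 ∧
      eta e4 e4 = 1 ∧ eta e5 e5 = 1 := by
  obtain ⟨e, heig, hgram⟩ := exists_eta_orthonormal_eigenvectors hR ht hμ
  have hli : LinearIndependent ℝ e :=
    LinearMap.BilinForm.linearIndependent_of_iIsOrtho (B := etaForm)
      (fun i j hij => (hgram i j).trans (if_neg hij))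
      (fun i => by rw [etaForm_apply, hgram, if_pos rfl]; split_ifs <;> norm_num)
  have hspan := hli.span_eq_top_of_card_eq_finrank (by simp)
  have hrange : Set.range e = {e 0, e 1, e 2, e 3, e 4} := by
    ext x; simp [Fin.exists_fin_succ, eq_comm]
  rw [← FinVec.etaExpand_eq e] at hli
  refine ⟨e 0, e 1, e 2, e 3, e 4, ⟨hli, hrange ▸ hspan⟩,
    heig 0, heig 1, heig 2, heig 3, heig 4, ?_⟩
  simp [hgram, Fin.ext_iff]
end
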